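/- arXiv:1110.0712 — 8 statements merged into one kernel-verified Lean document; each statement's English description precedes it below -/
import Mathlib

section
/- Let m ≥ 1 and α ∈ ℝ^m with Σ|α_i| < 1. Suppose S_0, S_1, …, S_m, C_0, C_1, …, C_m are real numbers with S_i ≥ 0 and S_i² + C_i² = 1 for all 0 ≤ i ≤ m, and suppose S_0 = Σ_{i=1}^m α_i' S_i and C_0 = Σ_{i=1}^m α_i C_i, where each α_i' has |α_i'| ≤ |α_i|. Then we obtain a contradiction; i.e., no such numbers exist. -/
/-- the key Cauchy–Schwarz computation: no such numbers exist. -/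
theorem stmt_0 (m : ℕ) (hm : 1 ≤ m) (α α' : Fin m → ℝ)
    (hsum : ∑ i, |α i| < 1) (hα' : ∀ i, |α' i| ≤ |α i|)
    (S0 C0 : ℝ) (S C : Fin m → ℝ)
    (hS0 : 0 ≤ S0) (hS : ∀ i, 0 ≤ S i)
    (hn0 : S0 ^ 2 + C0 ^ 2 = 1) (hn : ∀ i, (S i) ^ 2 + (C i) ^ 2 = 1)
    (heS : S0 = ∑ i, α' i * S i) (heC : C0 = ∑ i, α i * C i) : False := by
  have key : ∀ i, α' i * S i * S0 + α i * C i * C0 ≤ |α i| := by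
    intro i
    have h1 : S0 * S i + |C0| * |C i| ≤ 1 := by
      nlinarith [sq_nonneg (S0 - S i), sq_nonneg (|C0| - |C i|), sq_abs C0, sq_abs (C i),
        hn i, hn0]
    have h2 : α' i * S i * S0 ≤ |α i| * (S0 * S i) := by
      have : α' i ≤ |α i| := le_trans (le_abs_self _) (hα' i)
      nlinarith [mul_nonneg hS0 (hS i)]
    have h3 : α i * C i * C0 ≤ |α i| * (|C0| * |C i|) :=
      calc α i * C i * C0 ≤ |α i * C i * C0| := le_abs_self _
        _ = |α i| * (|C0| * |C i|) := by rw [abs_mul, abs_mul]; ring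
    nlinarith [abs_nonneg (α i)]
  have h4 : (1:ℝ) ≤ ∑ i, |α i| := by
    calc (1:ℝ) = S0 * S0 + C0 * C0 := by nlinarith
      _ = (∑ i, α' i * S i) * S0 + (∑ i, α i * C i) * C0 := by rw [← heS, ← heC]
      _ = ∑ i, (α' i * S i * S0 + α i * C i * C0) := by
          rw [Finset.sum_mul, Finset.sum_mul, ← Finset.sum_add_distrib]
      _ ≤ ∑ i, |α i| := Finset.sum_le_sum fun i _ => key i
  linarith
end

section
/- Let Ψ : ℝ → ℝ be the solution of the initial value problem -Ψ'' = γ₊² Ψ⁺ - γ₋² Ψ⁻, Ψ(0) = 0, Ψ'(0) = 1, where γ₊, γ₋ > 0 and Ψ⁺(x) = max{Ψ(x),0}, Ψ⁻(x) = max{-Ψ(x),0}. Then Ψ is periodic with period p = π/γ₊ + π/γ₋. -/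
/-!
In the phase plane `(Ψ, Ψ')` the equation is an autonomous first-order system with a Lipschitz
vector field, so solutions are unique and a solution that returns to its initial state is
periodic. From a state `(0, c)` with `c ≥ 0` the solution follows the arc
`(c sin (γ₊ t) / γ₊, c cos (γ₊ t))`, on which the nonlinearity is linear, and reaches `(0, -c)`
at time `π / γ₊`. Since `-Ψ` solves the equation with `γ₊` and `γ₋` exchanged, the same argument
brings the solution back to `(0, c)` after a further time `π / γ₋`.
-/

open Real Set

theorem ODE_solution_periodic {E : Type*} [NormedAddCommGroup E] [NormedSpace ℝ E]
    {v : E → E} {K : NNReal} (hv : LipschitzWith K v) {F : ℝ → E}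
    (hF : ∀ t, HasDerivAt F (v (F t)) t) {p : ℝ} (hp : F p = F 0) :
    Function.Periodic F p :=
  congrFun <| ODE_solution_unique_univ (v := fun _ => v) (s := fun _ => univ) (t₀ := 0)
    (fun _ => hv.lipschitzOnWith) (fun t => ⟨(hF (t + p)).comp_add_const t p, trivial⟩)
    (fun t => ⟨hF t, trivial⟩) (by rwa [zero_add])

/-- The equation `-u'' = γp² u⁺ - γm² u⁻` as a first-order system in the phase variable
`q = (u, u')`. -/
def jumpingField (γp γm : ℝ) (q : ℝ × ℝ) : ℝ × ℝ :=
  (q.2, -(γp ^ 2 * max q.1 0 - γm ^ 2 * max (-q.1) 0))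

theorem lipschitzWith_jumpingField (γp γm : ℝ) :
    ∃ K, LipschitzWith K (jumpingField γp γm) := by
  have hpos : LipschitzWith 1 fun q : ℝ × ℝ => max q.1 0 := LipschitzWith.prod_fst.max_const 0
  have hneg : LipschitzWith 1 fun q : ℝ × ℝ => max (-q.1) 0 :=
    LipschitzWith.prod_fst.neg.max_const 0
  exact ⟨_, LipschitzWith.prod_snd.prodMk
    (((lipschitzWith_smul (γp ^ 2)).comp hpos).sub
      ((lipschitzWith_smul (γm ^ 2)).comp hneg)).neg⟩

theorem jumpingField_neg (γp γm : ℝ) (q : ℝ × ℝ) :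
    jumpingField γp γm (-q) = -jumpingField γm γp q := by
  simp only [jumpingField, Prod.fst_neg, Prod.snd_neg, neg_neg, Prod.neg_mk]
  ring_nf

theorem jumpingField_of_nonneg (γp γm : ℝ) {q : ℝ × ℝ} (hq : 0 ≤ q.1) :
    jumpingField γp γm q = (q.2, -(γp ^ 2 * q.1)) := by
  simp [jumpingField, hq]

section Solution

variable {γp γm : ℝ} {F : ℝ → ℝ × ℝ}

theorem jumpingField_solution_neg (hF : ∀ t, HasDerivAt F (jumpingField γp γm (F t)) t)
    (t : ℝ) : HasDerivAt (-F) (jumpingField γm γp ((-F) t)) t := by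
  simpa only [Pi.neg_apply, jumpingField_neg, neg_neg] using (hF t).neg

theorem jumpingField_solution_add_pi_div (hγp : 0 < γp)
    (hF : ∀ t, HasDerivAt F (jumpingField γp γm (F t)) t) {a c : ℝ} (hc : 0 ≤ c)
    (ha : F a = (0, c)) : F (a + π / γp) = (0, -c) := by
  set arc : ℝ → ℝ × ℝ := fun t => (c * sin (γp * (t - a)) / γp, c * cos (γp * (t - a)))
  have harc : ∀ t, HasDerivAt arc ((arc t).2, -(γp ^ 2 * (arc t).1)) t := by
    intro t
    have hlin : HasDerivAt (fun t => γp * (t - a)) γp t := by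
      simpa using ((hasDerivAt_id t).sub_const a).const_mul γp
    have hsin := (((hasDerivAt_sin _).comp t hlin).const_mul c).div_const γp
    have hcos := ((hasDerivAt_cos _).comp t hlin).const_mul c
    refine (hsin.prodMk hcos).congr_deriv ?_
    ext <;> simp only [arc] <;> field_simp
  have harc_solution : ∀ t ∈ Ico a (a + π / γp),
      HasDerivWithinAt arc (jumpingField γp γm (arc t)) (Ici t) t := by
    intro t ht
    have hsin : 0 ≤ sin (γp * (t - a)) := by
      apply sin_nonneg_of_nonneg_of_le_pi (by nlinarith [ht.1])
      rw [← le_div_iff₀' hγp]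
      linarith [ht.2]
    rw [jumpingField_of_nonneg _ _ (by positivity)]
    exact (harc t).hasDerivWithinAt
  obtain ⟨K, hK⟩ := lipschitzWith_jumpingField γp γm
  have hF_eq_arc := ODE_solution_unique (v := fun _ => jumpingField γp γm) (fun _ => hK)
    (fun t _ => (hF t).continuousAt.continuousWithinAt) (fun t _ => (hF t).hasDerivWithinAt)
    (fun t _ => (harc t).continuousAt.continuousWithinAt) harc_solution (by simp [arc, ha])
  have hγpπ : γp * (π / γp) = π := mul_div_cancel₀ π hγp.ne'
  rw [hF_eq_arc ⟨le_add_of_nonneg_right (by positivity), le_rfl⟩]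
  simp [arc, hγpπ]

theorem jumpingField_solution_add_period (hγp : 0 < γp) (hγm : 0 < γm)
    (hF : ∀ t, HasDerivAt F (jumpingField γp γm (F t)) t) {a c : ℝ} (hc : 0 ≤ c)
    (ha : F a = (0, c)) : F (a + (π / γp + π / γm)) = (0, c) := by
  have hpositive := jumpingField_solution_add_pi_div hγp hF hc ha
  have hnegative := jumpingField_solution_add_pi_div hγm (jumpingField_solution_neg hF) hc
    (a := a + π / γp) (by simp [hpositive])
  simpa [← add_assoc] using congrArg Neg.neg hnegative

end Solution

/-- the solution Ψ of the jumping IVP is periodic with period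
π/γ₊ + π/γ₋. -/
theorem stmt_1 (γp γm : ℝ) (hγp : 0 < γp) (hγm : 0 < γm)
    (Ψ Ψ' : ℝ → ℝ)
    (hΨ : ∀ x, HasDerivAt Ψ (Ψ' x) x)
    (hΨ' : ∀ x, HasDerivAt Ψ'
      (-(γp ^ 2 * max (Ψ x) 0 - γm ^ 2 * max (-Ψ x) 0)) x)
    (h0 : Ψ 0 = 0) (h0' : Ψ' 0 = 1) :
    ∀ x, Ψ (x + (π / γp + π / γm)) = Ψ x := by
  set F : ℝ → ℝ × ℝ := fun t => (Ψ t, Ψ' t)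
  have hF : ∀ t, HasDerivAt F (jumpingField γp γm (F t)) t := fun t => (hΨ t).prodMk (hΨ' t)
  have hF0 : F 0 = (0, 1) := by simp [F, h0, h0']
  have hFp := jumpingField_solution_add_period hγp hγm hF zero_le_one hF0
  rw [zero_add, ← hF0] at hFp
  obtain ⟨K, hK⟩ := lipschitzWith_jumpingField γp γm
  exact fun x => congrArg Prod.fst (ODE_solution_periodic hK hF hFp x)
end

section
/- Define φ : [-1,1] → ℝ by φ(x) = (3/(2π)) sin((2π/3)(x+1)) for x ∈ [-1, 1/2], and φ(x) = -(1/π) cos(π(x-1)) for x ∈ [1/2, 1]. Then φ is continuously differentiable on [-1,1], twice differentiable on (-1,1) away from x = 1/2, and satisfies -φ'' = (2π/3)² φ⁺ - π² φ⁻ almost everywhere on (-1,1), together with the boundary conditions φ(-1) = 0 and φ(1) = -(2/3) φ(-1/4). -/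
/-!
On `[-1, 1/2]` the function is a positive half-wave of `-u'' = (2π/3)² u`, on `[1/2, 1]` a negative
quarter-wave of `-u'' = π² u`; both pieces vanish at `1/2` with slope `-1`, so they glue to a
`C¹` function that solves the jumping equation away from `1/2`. The boundary conditions are
`sin 0 = 0` and `φ 1 = -1/π = -(2/3) · (3/(2π)) sin (π/2)`.
-/

open Real Set Filter Topology

section Piecewise

variable {f g f' g' : ℝ → ℝ} {a x : ℝ}

theorem piecewise_le_eventuallyEq_left (hx : x < a) :
    (fun y => if y ≤ a then f y else g y) =ᶠ[𝓝 x] f :=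
  eventually_of_mem (Iio_mem_nhds hx) fun _ hy => if_pos (le_of_lt hy)

theorem piecewise_le_eventuallyEq_right (hx : a < x) :
    (fun y => if y ≤ a then f y else g y) =ᶠ[𝓝 x] g :=
  eventually_of_mem (Ioi_mem_nhds hx) fun _ hy => if_neg (not_le.mpr hy)

theorem hasDerivAt_piecewise_le (hf : ∀ x ≤ a, HasDerivAt f (f' x) x)
    (hg : ∀ x, a ≤ x → HasDerivAt g (g' x) x) (h₀ : f a = g a) (h₁ : f' a = g' a) (x : ℝ) :
    HasDerivAt (fun y => if y ≤ a then f y else g y) (if x ≤ a then f' x else g' x) x := by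
  rcases lt_trichotomy x a with hx | rfl | hx
  · rw [if_pos hx.le]
    exact (hf x hx.le).congr_of_eventuallyEq (piecewise_le_eventuallyEq_left hx)
  · rw [if_pos le_rfl]
    have hleft : HasDerivWithinAt (fun y => if y ≤ x then f y else g y) (f' x) (Iic x) x :=
      (hf x le_rfl).hasDerivWithinAt.congr (fun y hy => if_pos hy) (if_pos le_rfl)
    have hright : HasDerivWithinAt (fun y => if y ≤ x then f y else g y) (f' x) (Ici x) x := by
      refine h₁ ▸ (hg x le_rfl).hasDerivWithinAt.congr (fun y hy => ?_) (by simp [h₀])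
      rcases (mem_Ici.mp hy).eq_or_lt with rfl | hxy
      · simp [h₀]
      · exact if_neg (not_le.mpr hxy)
    simpa [Iic_union_Ici] using hleft.union hright
  · rw [if_neg (not_le.mpr hx)]
    exact (hg x hx.le).congr_of_eventuallyEq (piecewise_le_eventuallyEq_right hx)

end Piecewise

noncomputable def phiLeft (x : ℝ) : ℝ := (3 / (2 * π)) * sin ((2 * π / 3) * (x + 1))

noncomputable def phiRight (x : ℝ) : ℝ := -(1 / π) * cos (π * (x - 1))

noncomputable def phi (x : ℝ) : ℝ := if x ≤ 1 / 2 then phiLeft x else phiRight x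

noncomputable def phiDeriv (x : ℝ) : ℝ :=
  if x ≤ 1 / 2 then cos ((2 * π / 3) * (x + 1)) else sin (π * (x - 1))

theorem hasDerivAt_phiLeft (x : ℝ) :
    HasDerivAt phiLeft (cos ((2 * π / 3) * (x + 1))) x :=
  ((((hasDerivAt_id' x).add_const 1).const_mul (2 * π / 3)).sin.const_mul
    (3 / (2 * π))).congr_deriv (by field_simp [pi_ne_zero])

theorem hasDerivAt_phiRight (x : ℝ) : HasDerivAt phiRight (sin (π * (x - 1))) x :=
  ((((hasDerivAt_id' x).sub_const 1).const_mul π).cos.const_mul (-(1 / π))).congr_deriv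
    (by field_simp [pi_ne_zero])

theorem hasDerivAt_phiLeft_deriv (x : ℝ) :
    HasDerivAt (fun y => cos ((2 * π / 3) * (y + 1))) (-(2 * π / 3) ^ 2 * phiLeft x) x :=
  (((hasDerivAt_id' x).add_const 1).const_mul (2 * π / 3)).cos.congr_deriv
    (by rw [phiLeft]; field_simp [pi_ne_zero])

theorem hasDerivAt_phiRight_deriv (x : ℝ) :
    HasDerivAt (fun y => sin (π * (y - 1))) (-π ^ 2 * phiRight x) x :=
  (((hasDerivAt_id' x).sub_const 1).const_mul π).sin.congr_deriv
    (by rw [phiRight]; field_simp [pi_ne_zero])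

theorem phiLeft_half : phiLeft (1 / 2) = 0 := by
  rw [phiLeft, show 2 * π / 3 * (1 / 2 + 1) = π by ring, sin_pi, mul_zero]

theorem phiRight_half : phiRight (1 / 2) = 0 := by
  rw [phiRight, show π * (1 / 2 - 1) = -(π / 2) by ring, cos_neg, cos_pi_div_two, mul_zero]

theorem phiDeriv_half_left : cos ((2 * π / 3) * (1 / 2 + 1)) = -1 := by
  rw [show 2 * π / 3 * (1 / 2 + 1) = π by ring, cos_pi]

theorem phiDeriv_half_right : sin (π * (1 / 2 - 1)) = -1 := by
  rw [show π * (1 / 2 - 1) = -(π / 2) by ring, sin_neg, sin_pi_div_two]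

theorem hasDerivAt_phi (x : ℝ) : HasDerivAt phi (phiDeriv x) x :=
  hasDerivAt_piecewise_le (fun x _ => hasDerivAt_phiLeft x) (fun x _ => hasDerivAt_phiRight x)
    (phiLeft_half.trans phiRight_half.symm) (phiDeriv_half_left.trans phiDeriv_half_right.symm) x

theorem deriv_phi : deriv phi = phiDeriv := funext fun x => (hasDerivAt_phi x).deriv

theorem contDiff_phi : ContDiff ℝ 1 phi := by
  refine contDiff_one_iff_deriv.mpr ⟨fun x => (hasDerivAt_phi x).differentiableAt, ?_⟩
  rw [deriv_phi]
  exact (by fun_prop : Continuous fun x : ℝ => cos ((2 * π / 3) * (x + 1))).if_le (by fun_prop)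
    continuous_id continuous_const fun x hx => by
      rw [hx, phiDeriv_half_left, phiDeriv_half_right]

theorem phiLeft_nonneg {x : ℝ} (hx : x ∈ Icc (-1) (1 / 2)) : 0 ≤ phiLeft x := by
  have hpi := pi_pos
  refine mul_nonneg (by positivity) (sin_nonneg_of_nonneg_of_le_pi ?_ ?_) <;> nlinarith [hx.1, hx.2]

theorem phiRight_nonpos {x : ℝ} (hx : x ∈ Icc (1 / 2) 1) : phiRight x ≤ 0 := by
  have hpi := pi_pos
  refine mul_nonpos_of_nonpos_of_nonneg (by simp [hpi.le]) (cos_nonneg_of_mem_Icc ⟨?_, ?_⟩) <;>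
    nlinarith [hx.1, hx.2]

theorem hasDerivAt_deriv_phi {x : ℝ} (hx : x ∈ Ioo (-1) 1) (hne : x ≠ 1 / 2) :
    HasDerivAt (deriv phi)
      (-((2 * π / 3) ^ 2 * max (phi x) 0 - π ^ 2 * max (-phi x) 0)) x := by
  rw [deriv_phi]
  rcases hne.lt_or_gt with hlt | hgt
  · have hphi : phi x = phiLeft x := if_pos hlt.le
    have hnonneg : 0 ≤ phi x := hphi ▸ phiLeft_nonneg ⟨hx.1.le, hlt.le⟩
    rw [max_eq_left hnonneg, max_eq_right (neg_nonpos.mpr hnonneg), hphi]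
    exact ((hasDerivAt_phiLeft_deriv x).congr_of_eventuallyEq
      (piecewise_le_eventuallyEq_left hlt)).congr_deriv (by ring)
  · have hphi : phi x = phiRight x := if_neg (not_le.mpr hgt)
    have hnonpos : phi x ≤ 0 := hphi ▸ phiRight_nonpos ⟨hgt.le, hx.2.le⟩
    rw [max_eq_right hnonpos, max_eq_left (neg_nonneg.mpr hnonpos), hphi]
    exact ((hasDerivAt_phiRight_deriv x).congr_of_eventuallyEq
      (piecewise_le_eventuallyEq_right hgt)).congr_deriv (by ring)

theorem phi_neg_one : phi (-1) = 0 := by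
  rw [phi, if_pos (by norm_num), phiLeft, neg_add_cancel, mul_zero, sin_zero, mul_zero]

theorem phi_one : phi 1 = -(2 / 3) * phi (-1 / 4) := by
  have hleft : phi (-1 / 4) = 3 / (2 * π) := by
    rw [phi, if_pos (by norm_num), phiLeft, show 2 * π / 3 * (-1 / 4 + 1) = π / 2 by ring,
      sin_pi_div_two, mul_one]
  rw [hleft, phi, if_neg (by norm_num), phiRight, sub_self, mul_zero, cos_zero]
  field_simp [pi_ne_zero]

/-- Example 3.6: the explicit function φ is C¹ on [-1,1],
twice differentiable away from x = 1/2, satisfies the jumping equation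
-φ'' = (2π/3)² φ⁺ - π² φ⁻ there, and satisfies the 3-point boundary
conditions φ(-1) = 0, φ(1) = -(2/3) φ(-1/4). -/
theorem stmt_4 (φ : ℝ → ℝ)
    (hφ : ∀ x : ℝ, φ x =
      if x ≤ 1 / 2 then (3 / (2 * π)) * sin ((2 * π / 3) * (x + 1))
      else -(1 / π) * cos (π * (x - 1))) :
    ContDiffOn ℝ 1 φ (Set.Icc (-1) 1) ∧
    (∀ x ∈ Set.Ioo (-1 : ℝ) 1, x ≠ 1 / 2 →
      DifferentiableAt ℝ (deriv φ) x ∧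
      deriv (deriv φ) x =
        -((2 * π / 3) ^ 2 * max (φ x) 0 - π ^ 2 * max (-φ x) 0)) ∧
    φ (-1) = 0 ∧ φ 1 = -(2 / 3) * φ (-1 / 4) := by
  obtain rfl : φ = phi := funext hφ
  refine ⟨contDiff_phi.contDiffOn, fun x hx hne => ?_, phi_neg_one, phi_one⟩
  have h := hasDerivAt_deriv_phi hx hne
  exact ⟨h.differentiableAt, h.deriv⟩
end

section
/- Let γ₊, γ₋ > 0, s > 0, m ≥ 1, α ∈ [0,∞)^m with Σ α_i < 1, η₀ ∈ ℝ, η ∈ ℝ^m. Let w be a nontrivial solution of -u'' = s²(γ₊² u⁺ - γ₋² u⁻) on ℝ satisfying w(η₀) = Σ_{i=1}^m α_i w(η_i). Then w'(η₀) ≠ 0. -/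
open Asymptotics

/-! Multiplying the equation by `w'` shows that the energy `w'² + P(w)`, with
`P(u) = s²(γ₊²(u⁺)² + γ₋²(u⁻)²)`, is constant along `w`. If `w'(η₀) = 0`, then
`P(w x) ≤ P(w η₀)` for all `x`; as `P` grows strictly with `|u|` on each half-line, `w` has a
global maximum at `η₀` if `w η₀ ≥ 0` and a global minimum if `w η₀ ≤ 0`. A weighted sum with
nonnegative weights of total mass `< 1` of values below (above) `w η₀` cannot equal `w η₀`
unless `w η₀ = 0`, and then `w ≡ 0`. -/

lemma hasDerivAt_sq_max_zero (u : ℝ) :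
    HasDerivAt (fun v : ℝ => max v 0 ^ 2) (2 * max u 0) u := by
  rcases lt_trichotomy u 0 with hu | rfl | hu
  · rw [max_eq_right hu.le, mul_zero]
    refine (hasDerivAt_const u (0 : ℝ)).congr_of_eventuallyEq ?_
    filter_upwards [eventually_lt_nhds hu] with v hv
    simp [max_eq_right hv.le]
  · rw [hasDerivAt_iff_isLittleO]
    simp only [max_self, ne_eq, OfNat.ofNat_ne_zero, not_false_eq_true, zero_pow, sub_zero,
      mul_zero, smul_zero]
    refine IsBigO.trans_isLittleO (isBigO_of_le _ fun v => ?_) (isLittleO_pow_id one_lt_two)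
    simp only [norm_pow, Real.norm_eq_abs, abs_of_nonneg (le_max_right v 0)]
    gcongr
    exact max_le (le_abs_self v) (abs_nonneg v)
  · rw [max_eq_left hu.le]
    refine (hasDerivAt_pow 2 u).congr_of_eventuallyEq ?_ |>.congr_deriv (by ring)
    filter_upwards [eventually_gt_nhds hu] with v hv
    simp [max_eq_left hv.le]

def jumpPotential (a b u : ℝ) : ℝ := a * max u 0 ^ 2 + b * max (-u) 0 ^ 2

lemma jumpPotential_neg (a b u : ℝ) : jumpPotential a b (-u) = jumpPotential b a u := by
  simp only [jumpPotential, neg_neg, add_comm]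

lemma hasDerivAt_jumpPotential (a b u : ℝ) :
    HasDerivAt (jumpPotential a b) (2 * (a * max u 0 - b * max (-u) 0)) u := by
  have hneg := (hasDerivAt_sq_max_zero (-u)).comp u (hasDerivAt_neg u)
  exact ((hasDerivAt_sq_max_zero u).const_mul a).add (hneg.const_mul b) |>.congr_deriv (by ring)

lemma le_of_jumpPotential_le {a b u v : ℝ} (ha : 0 < a) (hu : 0 ≤ u)
    (h : jumpPotential a b v ≤ jumpPotential a b u) : v ≤ u := by
  by_contra! huv
  have hv : 0 < v := hu.trans_lt huv
  simp only [jumpPotential, max_eq_left hu, max_eq_left hv.le, max_eq_right (neg_nonpos.2 hu),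
    max_eq_right (neg_nonpos.2 hv.le)] at h
  have : u ^ 2 < v ^ 2 := by gcongr
  nlinarith

lemma ge_of_jumpPotential_le {a b u v : ℝ} (hb : 0 < b) (hu : u ≤ 0)
    (h : jumpPotential a b v ≤ jumpPotential a b u) : u ≤ v := by
  have h' : jumpPotential b a (-v) ≤ jumpPotential b a (-u) := by
    rwa [jumpPotential_neg, jumpPotential_neg]
  exact neg_le_neg_iff.1 (le_of_jumpPotential_le hb (neg_nonneg.2 hu) h')

theorem energy_eq {f F w w' : ℝ → ℝ} (hF : ∀ u, HasDerivAt F (2 * f u) u)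
    (hw : ∀ x, HasDerivAt w (w' x) x) (hw' : ∀ x, HasDerivAt w' (-f (w x)) x) (x y : ℝ) :
    w' x ^ 2 + F (w x) = w' y ^ 2 + F (w y) := by
  have hE : ∀ x, HasDerivAt (fun x => w' x ^ 2 + F (w x)) 0 x := fun x =>
    ((hw' x).pow 2).add ((hF (w x)).comp x (hw x)) |>.congr_deriv (by ring)
  exact is_const_of_deriv_eq_zero (fun x => (hE x).differentiableAt) (fun x => (hE x).deriv) x y

lemma nonpos_of_eq_sum_mul_of_le {ι : Type*} [Fintype ι] {α x : ι → ℝ} {c : ℝ}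
    (hα0 : ∀ i, 0 ≤ α i) (hαs : ∑ i, α i < 1) (hc : c = ∑ i, α i * x i) (hx : ∀ i, x i ≤ c) :
    c ≤ 0 := by
  have : c ≤ (∑ i, α i) * c :=
    calc c = ∑ i, α i * x i := hc
      _ ≤ ∑ i, α i * c := Finset.sum_le_sum fun i _ => mul_le_mul_of_nonneg_left (hx i) (hα0 i)
      _ = (∑ i, α i) * c := (Finset.sum_mul ..).symm
  nlinarith

theorem stmt_6_general (γp γm s : ℝ) (hγp : 0 < γp) (hγm : 0 < γm) (hs : 0 < s)
    (m : ℕ) (α : Fin m → ℝ)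
    (hα0 : ∀ i, 0 ≤ α i) (hαs : ∑ i, α i < 1)
    (η0 : ℝ) (η : Fin m → ℝ)
    (w w' : ℝ → ℝ)
    (hw : ∀ x, HasDerivAt w (w' x) x)
    (hw' : ∀ x, HasDerivAt w'
      (-(s ^ 2 * (γp ^ 2 * max (w x) 0 - γm ^ 2 * max (-w x) 0))) x)
    (hne : w ≠ 0)
    (hbc : w η0 = ∑ i, α i * w (η i)) :
    w' η0 ≠ 0 := by
  intro h0
  set P := jumpPotential (s ^ 2 * γp ^ 2) (s ^ 2 * γm ^ 2)
  have ha : 0 < s ^ 2 * γp ^ 2 := by positivity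
  have hb : 0 < s ^ 2 * γm ^ 2 := by positivity
  have hP : ∀ x, P (w x) ≤ P (w η0) := fun x => by
    have := energy_eq (hasDerivAt_jumpPotential (s ^ 2 * γp ^ 2) (s ^ 2 * γm ^ 2)) hw
      (fun x => (hw' x).congr_deriv (by ring)) x η0
    nlinarith [sq_nonneg (w' x)]
  have hmax : 0 ≤ w η0 → ∀ x, w x ≤ w η0 := fun h x => le_of_jumpPotential_le ha h (hP x)
  have hmin : w η0 ≤ 0 → ∀ x, w η0 ≤ w x := fun h x => ge_of_jumpPotential_le hb h (hP x)
  have hw0 : w η0 = 0 := by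
    rcases le_total 0 (w η0) with hpos | hneg
    · exact le_antisymm (nonpos_of_eq_sum_mul_of_le hα0 hαs hbc fun i => hmax hpos _) hpos
    · have hbc' : -w η0 = ∑ i, α i * -w (η i) := by simp [hbc, Finset.sum_neg_distrib]
      have := nonpos_of_eq_sum_mul_of_le hα0 hαs hbc' fun i => neg_le_neg (hmin hneg _)
      linarith
  exact hne (funext fun x => (le_antisymm (hmax hw0.ge x) (hmin hw0.le x)).trans hw0)

/-- Lemma 4.3: a nontrivial solution of the jumping equation
satisfying a multi-point condition with nonnegative coefficients summing to
less than 1 has nonzero derivative at η₀. -/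
theorem stmt_6 (γp γm s : ℝ) (hγp : 0 < γp) (hγm : 0 < γm) (hs : 0 < s)
    (m : ℕ) (hm : 1 ≤ m) (α : Fin m → ℝ)
    (hα0 : ∀ i, 0 ≤ α i) (hαs : ∑ i, α i < 1)
    (η0 : ℝ) (η : Fin m → ℝ)
    (w w' : ℝ → ℝ)
    (hw : ∀ x, HasDerivAt w (w' x) x)
    (hw' : ∀ x, HasDerivAt w'
      (-(s ^ 2 * (γp ^ 2 * max (w x) 0 - γm ^ 2 * max (-w x) 0))) x)
    (hne : w ≠ 0)
    (hbc : w η0 = ∑ i, α i * w (η i)) :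
    w' η0 ≠ 0 :=
  stmt_6_general γp γm s hγp hγm hs m α hα0 hαs η0 η w w' hw hw' hne hbc
end

section
/- Let λ, a > 0 and let x₀ ∈ (-1,1). Consider the initial value problem -v'' = a v + λ v - 1, v(x_l) = 0, v'(x_l) ≥ 0 for x_l ∈ (-1,1). There exists δ > 0 such that for every x_l ∈ [1-δ, 1), every solution v of this problem has no zero in (x_l, 1]. -/
/-!
With `ω = √(a + λ)` the problem reads `v'' = 1 - ω² v`, whose solution with `v(x_l) = 0`,
`v'(x_l) = d` is `(1 - cos (ω (x - x_l))) / ω² + (d / ω) sin (ω (x - x_l))`; uniqueness follows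
from conservation of the energy `w'² + ω² w²` for the difference of two solutions. On
`(x_l, x_l + π / ω]` the first summand is positive and the second nonnegative, so `δ = π / ω`
works.
-/

open Real Set

theorem eq_zero_of_hasDerivAt_of_harmonic {k : ℝ} (hk : 0 < k) {w w' : ℝ → ℝ}
    (hw : ∀ x, HasDerivAt w (w' x) x) (hw' : ∀ x, HasDerivAt w' (-(k * w x)) x)
    {x₀ : ℝ} (hw₀ : w x₀ = 0) (hw'₀ : w' x₀ = 0) (x : ℝ) : w x = 0 := by
  set energy : ℝ → ℝ := fun y => w' y ^ 2 + k * w y ^ 2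
  have h_energy : ∀ y, HasDerivAt energy 0 y := fun y =>
    (((hw' y).pow 2).add (((hw y).pow 2).const_mul k)).congr_deriv (by ring)
  have h_const : energy x = energy x₀ :=
    is_const_of_deriv_eq_zero (fun y => (h_energy y).differentiableAt)
      (fun y => (h_energy y).deriv) x x₀
  have h_energy₀ : energy x₀ = 0 := by simp [energy, hw₀, hw'₀]
  have : w x ^ 2 = 0 := by nlinarith [sq_nonneg (w' x), sq_nonneg (w x)]
  exact pow_eq_zero_iff two_ne_zero |>.mp this

noncomputable def forcedOscillator (ω d x₀ y : ℝ) : ℝ :=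
  (1 - cos (ω * (y - x₀))) / ω ^ 2 + d / ω * sin (ω * (y - x₀))

noncomputable def forcedOscillatorDeriv (ω d x₀ y : ℝ) : ℝ :=
  sin (ω * (y - x₀)) / ω + d * cos (ω * (y - x₀))

theorem hasDerivAt_phase (ω x₀ y : ℝ) : HasDerivAt (fun y => ω * (y - x₀)) ω y := by
  simpa using ((hasDerivAt_id y).sub_const x₀).const_mul ω

section ForcedOscillator

variable {ω : ℝ} (d x₀ : ℝ)

theorem hasDerivAt_forcedOscillator (hω : ω ≠ 0) (y : ℝ) :
    HasDerivAt (forcedOscillator ω d x₀) (forcedOscillatorDeriv ω d x₀ y) y := by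
  refine ((((hasDerivAt_phase ω x₀ y).cos.const_sub 1).div_const (ω ^ 2)).add
    ((hasDerivAt_phase ω x₀ y).sin.const_mul (d / ω))).congr_deriv ?_
  unfold forcedOscillatorDeriv
  field_simp

theorem hasDerivAt_forcedOscillatorDeriv (hω : ω ≠ 0) (y : ℝ) :
    HasDerivAt (forcedOscillatorDeriv ω d x₀) (1 - ω ^ 2 * forcedOscillator ω d x₀ y) y := by
  refine (((hasDerivAt_phase ω x₀ y).sin.div_const ω).add
    ((hasDerivAt_phase ω x₀ y).cos.const_mul d)).congr_deriv ?_
  unfold forcedOscillator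
  field_simp
  ring

theorem forcedOscillator_pos (hω : 0 < ω) {d : ℝ} (hd : 0 ≤ d) {y : ℝ}
    (hy : y ∈ Ioc x₀ (x₀ + π / ω)) : 0 < forcedOscillator ω d x₀ y := by
  obtain ⟨hy₀, hy₁⟩ := hy
  have h_phase_pos : 0 < ω * (y - x₀) := mul_pos hω (by linarith)
  have h_phase_le : ω * (y - x₀) ≤ π := by
    rw [← le_div_iff₀' hω]
    linarith
  have h_cos : cos (ω * (y - x₀)) < 1 := by
    simpa using cos_lt_cos_of_nonneg_of_le_pi le_rfl h_phase_le h_phase_pos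
  have h_sin : 0 ≤ sin (ω * (y - x₀)) := sin_nonneg_of_nonneg_of_le_pi h_phase_pos.le h_phase_le
  unfold forcedOscillator
  have : 0 < (1 - cos (ω * (y - x₀))) / ω ^ 2 := div_pos (by linarith) (by positivity)
  have : 0 ≤ d / ω * sin (ω * (y - x₀)) := by positivity
  linarith

theorem eq_forcedOscillator (hω : ω ≠ 0) {v v' : ℝ → ℝ} (hv : ∀ x, HasDerivAt v (v' x) x)
    (hv' : ∀ x, HasDerivAt v' (1 - ω ^ 2 * v x) x) (hv₀ : v x₀ = 0) (y : ℝ) :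
    v y = forcedOscillator ω (v' x₀) x₀ y := by
  have h_diff := eq_zero_of_hasDerivAt_of_harmonic (by positivity : 0 < ω ^ 2)
    (w := fun x => v x - forcedOscillator ω (v' x₀) x₀ x)
    (w' := fun x => v' x - forcedOscillatorDeriv ω (v' x₀) x₀ x)
    (fun x => (hv x).sub (hasDerivAt_forcedOscillator _ _ hω x))
    (fun x => ((hv' x).sub (hasDerivAt_forcedOscillatorDeriv _ _ hω x)).congr_deriv
      (by ring))
    (x₀ := x₀) (by simp [forcedOscillator, hv₀]) (by simp [forcedOscillatorDeriv]) y
  exact sub_eq_zero.mp h_diff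

end ForcedOscillator

theorem stmt_8_general (lam a : ℝ) (hlam : 0 < lam) (ha : 0 < a) :
    ∃ δ > (0 : ℝ), ∀ xl ∈ Set.Ico (1 - δ) (1 : ℝ), xl ∈ Set.Ioo (-1 : ℝ) 1 →
      ∀ v v' : ℝ → ℝ,
        (∀ x, HasDerivAt v (v' x) x) →
        (∀ x, HasDerivAt v' (-(a * v x + lam * v x - 1)) x) →
        v xl = 0 → 0 ≤ v' xl →
        ∀ x ∈ Set.Ioc xl (1 : ℝ), v x ≠ 0 := by
  set ω := √(a + lam)
  have hω : 0 < ω := sqrt_pos.mpr (by positivity)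
  have hω_sq : ω ^ 2 = a + lam := sq_sqrt (by positivity)
  refine ⟨π / ω, by positivity, ?_⟩
  rintro xl ⟨hxl_ge, hxl_lt⟩ - v v' hv hv' hv₀ hd x ⟨hx₀, hx₁⟩
  have hv'' : ∀ y, HasDerivAt v' (1 - ω ^ 2 * v y) y := fun y =>
    (hv' y).congr_deriv (by rw [hω_sq]; ring)
  rw [eq_forcedOscillator xl hω.ne' hv hv'' hv₀ x]
  exact (forcedOscillator_pos xl hω hd ⟨hx₀, by linarith⟩).ne'

/-- the auxiliary IVP -v'' = a v + λ v - 1, v(x_l) = 0,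
v'(x_l) ≥ 0 has no zero in (x_l, 1] when x_l is close enough to 1. -/
theorem stmt_8 (lam a : ℝ) (hlam : 0 < lam) (ha : 0 < a)
    (x₀ : ℝ) (hx₀ : x₀ ∈ Set.Ioo (-1 : ℝ) 1) :
    ∃ δ > (0 : ℝ), ∀ xl ∈ Set.Ico (1 - δ) (1 : ℝ), xl ∈ Set.Ioo (-1 : ℝ) 1 →
      ∀ v v' : ℝ → ℝ,
        (∀ x, HasDerivAt v (v' x) x) →
        (∀ x, HasDerivAt v' (-(a * v x + lam * v x - 1)) x) →
        v xl = 0 → 0 ≤ v' xl →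
        ∀ x ∈ Set.Ioc xl (1 : ℝ), v x ≠ 0 :=
  stmt_8_general lam a hlam ha
end

section
/- Let λ, a, b > 0, let x₀ ∈ (-1,1), and let h : [-1,1] → ℝ be defined by h(x) = 0 for x < x₀ and h(x) = -1 for x ≥ x₀. Suppose Φ₀, Φ_h ∈ W^{2,1}(-1,1) satisfy -Φ₀'' = λ(aΦ₀⁺ - bΦ₀⁻) and -Φ_h'' = λ(aΦ_h⁺ - bΦ_h⁻) + h on (x₀,1), with Φ_h(x₀) = Φ₀(x₀), Φ_h'(x₀) = Φ₀'(x₀), and suppose Φ₀ has no zeros on [x₀,1], Φ_h has at most one zero in (x₀,1], and Φ₀ ≥ 0 on (x₀,1). Then Φ_h(x) > Φ₀(x) for all x ∈ (x₀,1]. -/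
/-!
`Φ₀ > 0` on `[x₀, 1]`, so as long as `Φ_h > Φ₀` both equations are linear with the same
coefficient `k = λa`, and the Wronskian `W = Φ_h' Φ₀ - Φ_h Φ₀'` satisfies `W' = Φ₀ > 0`.
Since `(Φ_h / Φ₀)' = W / Φ₀²`, the ratio `Φ_h / Φ₀` could rise above `1` and then fall back to
`1` only if `W` changed sign from `+` to `-`, which its monotonicity forbids; so `Φ_h - Φ₀`
has no first zero after `x₀`. It is positive just to the right of `x₀` because it vanishes
there to first order while `(Φ_h - Φ₀)'' = 1 - λa(Φ_h - Φ₀)` is close to `1`.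
-/

open Set Filter Topology

theorem pos_of_ne_zero_of_nonneg_on_Ioo {f : ℝ → ℝ} {a b : ℝ} (hab : a < b)
    (hf : ContinuousOn f (Icc a b)) (hne : ∀ x ∈ Icc a b, f x ≠ 0)
    (hnonneg : ∀ x ∈ Ioo a b, 0 ≤ f x) : ∀ x ∈ Icc a b, 0 < f x := by
  intro x hx
  have hm : (a + b) / 2 ∈ Ioo a b := ⟨left_lt_add_div_two.2 hab, add_div_two_lt_right.2 hab⟩
  have hfm : 0 < f ((a + b) / 2) := (hnonneg _ hm).lt_of_ne' (hne _ (Ioo_subset_Icc_self hm))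
  by_contra! hfx
  obtain ⟨z, hz, hfz⟩ :=
    isPreconnected_Icc.intermediate_value hx (Ioo_subset_Icc_self hm) hf ⟨hfx, hfm.le⟩
  exact hne z hz hfz

theorem add_mul_sub_lt_of_deriv2_pos {f f' f'' : ℝ → ℝ} {a b : ℝ}
    (hf : ∀ x ∈ Ico a b, HasDerivAt f (f' x) x) (hf' : ∀ x ∈ Ioo a b, HasDerivAt f' (f'' x) x)
    (hf'' : ∀ x ∈ Ioo a b, 0 < f'' x) : ∀ x ∈ Ioo a b, f a + f' a * (x - a) < f x := by
  intro x hx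
  have hmono : StrictMonoOn f' (Ioo a b) :=
    strictMonoOn_of_deriv_pos (convex_Ioo a b)
      (fun y hy => (hf' y hy).continuousAt.continuousWithinAt)
      (fun y hy => by rw [interior_Ioo] at hy; rw [(hf' y hy).deriv]; exact hf'' y hy)
  have hconv : StrictConvexOn ℝ (Ico a b) f := by
    refine StrictMonoOn.strictConvexOn_of_deriv (convex_Ico a b)
      (fun y hy => (hf y hy).continuousAt.continuousWithinAt) ?_
    rw [interior_Ico]
    exact hmono.congr fun y hy => ((hf y (Ioo_subset_Ico_self hy)).deriv).symm
  have ha : a ∈ Ico a b := left_mem_Ico.2 (hx.1.trans hx.2)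
  have hslope := hconv.lt_slope_of_hasDerivAt ha (Ioo_subset_Ico_self hx) hx.1 (hf a ha)
  rw [slope_def_field, lt_div_iff₀ (sub_pos.2 hx.1)] at hslope
  linarith

theorem exists_first_nonpos {f : ℝ → ℝ} {a x : ℝ} (hf : ContinuousOn f (Icc a x))
    (hpos : ∀ᶠ y in 𝓝[>] a, 0 < f y) (hax : a < x) (hfx : f x ≤ 0) :
    ∃ c ∈ Ioc a x, f c ≤ 0 ∧ ∀ y ∈ Ioo a c, 0 < f y := by
  obtain ⟨u, hau : a < u, hu⟩ := mem_nhdsGT_iff_exists_Ioo_subset.1 hpos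
  have hux : u ≤ x := by
    by_contra! hxu
    exact (hu ⟨hax, hxu⟩ : 0 < f x).not_ge hfx
  set S := Icc u x ∩ f ⁻¹' Iic 0
  have hS : IsClosed S :=
    (hf.mono (Icc_subset_Icc_left hau.le)).preimage_isClosed_of_isClosed
      isClosed_Icc isClosed_Iic
  have hbdd : BddBelow S := ⟨u, fun y hy => hy.1.1⟩
  obtain ⟨⟨hcu, hcx⟩, hfc⟩ := hS.csInf_mem ⟨x, ⟨hux, le_rfl⟩, hfx⟩ hbdd
  refine ⟨sInf S, ⟨hau.trans_le hcu, hcx⟩, hfc, fun y hy => ?_⟩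
  rcases lt_or_ge y u with hyu | hyu
  · exact hu ⟨hy.1, hyu⟩
  · by_contra! hfy
    exact (csInf_le hbdd ⟨⟨hyu, hy.2.le.trans hcx⟩, hfy⟩).not_gt hy.2

theorem hasDerivAt_wronskian {u u' v v' : ℝ → ℝ} {k x : ℝ} (hu : HasDerivAt u (u' x) x)
    (hu' : HasDerivAt u' (-(k * u x) + 1) x) (hv : HasDerivAt v (v' x) x)
    (hv' : HasDerivAt v' (-(k * v x)) x) :
    HasDerivAt (fun y => u' y * v y - u y * v' y) (v x) x :=
  ((hu'.mul hv).sub (hu.mul hv')).congr_deriv (by ring)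

theorem eventually_lt_of_forced_of_tangent {u u' v v' : ℝ → ℝ} {k a b : ℝ} (hab : a < b)
    (hu : ∀ x ∈ Icc a b, HasDerivAt u (u' x) x) (hv : ∀ x ∈ Icc a b, HasDerivAt v (v' x) x)
    (hu' : ∀ x ∈ Ioo a b, 0 ≤ u x → HasDerivAt u' (-(k * u x) + 1) x)
    (hv' : ∀ x ∈ Ioo a b, HasDerivAt v' (-(k * v x)) x)
    (ha : u a = v a) (ha' : u' a = v' a) (hva : 0 < v a) : ∀ᶠ x in 𝓝[>] a, v x < u x := by
  have haI : a ∈ Icc a b := left_mem_Icc.2 hab.le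
  have hloc : ∀ᶠ x in 𝓝 a, 0 < u x ∧ k * (u x - v x) < 1 :=
    ((hu a haI).continuousAt.eventually_const_lt (ha ▸ hva)).and
      ((continuousAt_const.mul ((hu a haI).continuousAt.sub
        (hv a haI).continuousAt)).eventually_lt_const (by simp [ha]))
  obtain ⟨c, hc, hsub⟩ :=
    (mem_nhdsGT_iff_exists_mem_Ioc_Ioo_subset hab).1 (nhdsWithin_le_nhds hloc)
  have hIco : Ico a c ⊆ Icc a b := Ico_subset_Icc_self.trans (Icc_subset_Icc_right hc.2)
  have hIoo : Ioo a c ⊆ Ioo a b := Ioo_subset_Ioo_right hc.2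
  have hD'' : ∀ x ∈ Ioo a c, HasDerivAt (fun y => u' y - v' y) (1 - k * (u x - v x)) x :=
    fun x hx => ((hu' x (hIoo hx) (hsub hx).1.le).sub (hv' x (hIoo hx))).congr_deriv (by ring)
  filter_upwards [Ioo_mem_nhdsGT hc.1] with x hx
  simpa [ha, ha'] using add_mul_sub_lt_of_deriv2_pos
    (fun y hy => (hu y (hIco hy)).sub (hv y (hIco hy))) hD''
    (fun y hy => sub_pos.2 (hsub hy).2) x hx

theorem lt_of_forced_of_lt_on_Ioo {u u' v v' : ℝ → ℝ} {k a c : ℝ} (hac : a < c)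
    (hu : ∀ x ∈ Icc a c, HasDerivAt u (u' x) x) (hv : ∀ x ∈ Icc a c, HasDerivAt v (v' x) x)
    (hu' : ∀ x ∈ Ioo a c, HasDerivAt u' (-(k * u x) + 1) x)
    (hv' : ∀ x ∈ Ioo a c, HasDerivAt v' (-(k * v x)) x)
    (hv0 : ∀ x ∈ Icc a c, 0 < v x) (ha : u a ≤ v a) (hlt : ∀ x ∈ Ioo a c, v x < u x) :
    v c < u c := by
  by_contra! hc
  set W := fun y => u' y * v y - u y * v' y
  have hW : ∀ y ∈ Ioo a c, HasDerivAt W (v y) y := fun y hy =>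
    hasDerivAt_wronskian (hu y (Ioo_subset_Icc_self hy)) (hu' y hy)
      (hv y (Ioo_subset_Icc_self hy)) (hv' y hy)
  have hWmono : StrictMonoOn W (Ioo a c) :=
    strictMonoOn_of_deriv_pos (convex_Ioo a c)
      (fun y hy => (hW y hy).continuousAt.continuousWithinAt)
      (fun y hy => by
        rw [interior_Ioo] at hy
        rw [(hW y hy).deriv]
        exact hv0 y (Ioo_subset_Icc_self hy))
  have hρ : ∀ y ∈ Ioo a c, HasDerivAt (fun y => u y / v y) (W y / v y ^ 2) y := fun y hy =>
    (hu y (Ioo_subset_Icc_self hy)).div (hv y (Ioo_subset_Icc_self hy))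
      (hv0 y (Ioo_subset_Icc_self hy)).ne'
  have hρc : ContinuousOn (fun y => u y / v y) (Icc a c) := fun y hy =>
    ((hu y hy).continuousAt.div (hv y hy).continuousAt (hv0 y hy).ne').continuousWithinAt
  set m := (a + c) / 2
  have hm : m ∈ Ioo a c := ⟨left_lt_add_div_two.2 hac, add_div_two_lt_right.2 hac⟩
  have hρa : u a / v a ≤ 1 := (div_le_one (hv0 a (left_mem_Icc.2 hac.le))).2 ha
  have hρm : 1 < u m / v m := (one_lt_div (hv0 m (Ioo_subset_Icc_self hm))).2 (hlt m hm)
  have hρc' : u c / v c ≤ 1 := (div_le_one (hv0 c (right_mem_Icc.2 hac.le))).2 hc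
  obtain ⟨ξ, hξ, hξeq⟩ := exists_hasDerivAt_eq_slope _ _ hm.1
    (hρc.mono (Icc_subset_Icc_right hm.2.le)) (fun y hy => hρ y ⟨hy.1, hy.2.trans hm.2⟩)
  obtain ⟨η, hη, hηeq⟩ := exists_hasDerivAt_eq_slope _ _ hm.2
    (hρc.mono (Icc_subset_Icc_left hm.1.le)) (fun y hy => hρ y ⟨hm.1.trans hy.1, hy.2⟩)
  have hξ' : ξ ∈ Ioo a c := ⟨hξ.1, hξ.2.trans hm.2⟩
  have hWξ : 0 < W ξ := by
    have : 0 < W ξ / v ξ ^ 2 := by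
      rw [hξeq]; exact div_pos (by linarith) (sub_pos.2 hm.1)
    exact (div_pos_iff_of_pos_right (pow_pos (hv0 ξ (Ioo_subset_Icc_self hξ')) 2)).1 this
  have hWη : W η < 0 := by
    have : W η / v η ^ 2 < 0 := by
      rw [hηeq]; exact div_neg_of_neg_of_pos (by linarith) (sub_pos.2 hm.2)
    exact neg_of_div_neg_left this (sq_nonneg _)
  have := hWmono hξ' ⟨hm.1.trans hη.1, hη.2⟩ (hξ.2.trans hη.1)
  linarith

theorem mul_max_sub_mul_max_neg_of_nonneg {lam a b u : ℝ} (hu : 0 ≤ u) :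
    lam * (a * max u 0 - b * max (-u) 0) = lam * a * u := by
  rw [max_eq_left hu, max_eq_right (neg_nonpos.2 hu)]
  ring

theorem stmt_9_general (lam a b : ℝ)
    (x₀ : ℝ) (hx₀ : x₀ ∈ Set.Ioo (-1 : ℝ) 1)
    (h : ℝ → ℝ) (hh : ∀ x : ℝ, h x = if x < x₀ then 0 else -1)
    (Φ0 Φ0' Φh Φh' : ℝ → ℝ)
    (hd0 : ∀ x ∈ Set.Icc x₀ (1 : ℝ), HasDerivAt Φ0 (Φ0' x) x)
    (hd0' : ∀ x ∈ Set.Ioo x₀ (1 : ℝ), HasDerivAt Φ0'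
      (-(lam * (a * max (Φ0 x) 0 - b * max (-Φ0 x) 0))) x)
    (hdh : ∀ x ∈ Set.Icc x₀ (1 : ℝ), HasDerivAt Φh (Φh' x) x)
    (hdh' : ∀ x ∈ Set.Ioo x₀ (1 : ℝ), HasDerivAt Φh'
      (-(lam * (a * max (Φh x) 0 - b * max (-Φh x) 0) + h x)) x)
    (hic : Φh x₀ = Φ0 x₀) (hic' : Φh' x₀ = Φ0' x₀)
    (h0nz : ∀ x ∈ Set.Icc x₀ (1 : ℝ), Φ0 x ≠ 0)
    (h0pos : ∀ x ∈ Set.Ioo x₀ (1 : ℝ), 0 ≤ Φ0 x) :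
    ∀ x ∈ Set.Ioc x₀ (1 : ℝ), Φ0 x < Φh x := by
  obtain ⟨-, hx₀1⟩ := hx₀
  have hΦ0 : ∀ x ∈ Icc x₀ 1, 0 < Φ0 x := pos_of_ne_zero_of_nonneg_on_Ioo hx₀1
    (fun x hx => (hd0 x hx).continuousAt.continuousWithinAt) h0nz h0pos
  have hΦ0'' : ∀ x ∈ Ioo x₀ 1, HasDerivAt Φ0' (-(lam * a * Φ0 x)) x := fun x hx => by
    simpa only [mul_max_sub_mul_max_neg_of_nonneg (hΦ0 x (Ioo_subset_Icc_self hx)).le]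
      using hd0' x hx
  have hΦh'' : ∀ x ∈ Ioo x₀ 1, 0 ≤ Φh x → HasDerivAt Φh' (-(lam * a * Φh x) + 1) x :=
    fun x hx hΦhx => by
      have := hdh' x hx
      rw [mul_max_sub_mul_max_neg_of_nonneg hΦhx, hh, if_neg hx.1.not_gt] at this
      exact this.congr_deriv (by ring)
  have hD : ContinuousOn (fun y => Φh y - Φ0 y) (Icc x₀ 1) := fun y hy =>
    ((hdh y hy).continuousAt.sub (hd0 y hy).continuousAt).continuousWithinAt
  have hnear : ∀ᶠ y in 𝓝[>] x₀, 0 < Φh y - Φ0 y :=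
    (eventually_lt_of_forced_of_tangent hx₀1 hdh hd0 hΦh'' hΦ0'' hic hic'
      (hΦ0 x₀ (left_mem_Icc.2 hx₀1.le))).mono fun y => sub_pos.2
  intro x hx
  by_contra! hle
  obtain ⟨c, hc, hDc, hDpos⟩ :=
    exists_first_nonpos (hD.mono (Icc_subset_Icc_right hx.2)) hnear hx.1 (sub_nonpos.2 hle)
  have hIcc : Icc x₀ c ⊆ Icc x₀ 1 := Icc_subset_Icc_right (hc.2.trans hx.2)
  have hIoo : Ioo x₀ c ⊆ Ioo x₀ 1 := Ioo_subset_Ioo_right (hc.2.trans hx.2)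
  have hlt : ∀ y ∈ Ioo x₀ c, Φ0 y < Φh y := fun y hy => sub_pos.1 (hDpos y hy)
  have hΦh : ∀ y ∈ Ioo x₀ c, 0 ≤ Φh y := fun y hy =>
    (hΦ0 y (hIcc (Ioo_subset_Icc_self hy))).le.trans (hlt y hy).le
  have hcomp := lt_of_forced_of_lt_on_Ioo hc.1 (fun y hy => hdh y (hIcc hy))
    (fun y hy => hd0 y (hIcc hy)) (fun y hy => hΦh'' y (hIoo hy) (hΦh y hy))
    (fun y hy => hΦ0'' y (hIoo hy)) (fun y hy => hΦ0 y (hIcc hy)) hic.le hlt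
  linarith

/-- case of Lemma 7.2: the comparison lemma
Φ_h > Φ₀ on (x₀,1]. -/
theorem stmt_9 (lam a b : ℝ) (hlam : 0 < lam) (ha : 0 < a) (hb : 0 < b)
    (x₀ : ℝ) (hx₀ : x₀ ∈ Set.Ioo (-1 : ℝ) 1)
    (h : ℝ → ℝ) (hh : ∀ x : ℝ, h x = if x < x₀ then 0 else -1)
    (Φ0 Φ0' Φh Φh' : ℝ → ℝ)
    (hd0 : ∀ x ∈ Set.Icc x₀ (1 : ℝ), HasDerivAt Φ0 (Φ0' x) x)
    (hd0' : ∀ x ∈ Set.Ioo x₀ (1 : ℝ), HasDerivAt Φ0'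
      (-(lam * (a * max (Φ0 x) 0 - b * max (-Φ0 x) 0))) x)
    (hdh : ∀ x ∈ Set.Icc x₀ (1 : ℝ), HasDerivAt Φh (Φh' x) x)
    (hdh' : ∀ x ∈ Set.Ioo x₀ (1 : ℝ), HasDerivAt Φh'
      (-(lam * (a * max (Φh x) 0 - b * max (-Φh x) 0) + h x)) x)
    (hic : Φh x₀ = Φ0 x₀) (hic' : Φh' x₀ = Φ0' x₀)
    (h0nz : ∀ x ∈ Set.Icc x₀ (1 : ℝ), Φ0 x ≠ 0)
    (hhzero : ∀ x y : ℝ, x ∈ Set.Ioc x₀ 1 → y ∈ Set.Ioc x₀ 1 →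
      Φh x = 0 → Φh y = 0 → x = y)
    (h0pos : ∀ x ∈ Set.Ioo x₀ (1 : ℝ), 0 ≤ Φ0 x) :
    ∀ x ∈ Set.Ioc x₀ (1 : ℝ), Φ0 x < Φh x :=
  stmt_9_general lam a b x₀ hx₀ h hh Φ0 Φ0' Φh Φh' hd0 hd0' hdh hdh' hic hic' h0nz h0pos
end

section
/- Let a ≠ b be positive reals, λ > 0, and x₁ ∈ (-1,1). Suppose v₁, v₂ are nontrivial solutions on [x₁,1] of -v₁'' = λ a v₁ and -v₂'' = λ b v₂ respectively, both nonzero on [x₁, 1), with v₁(x₁) = v₂(x₁), v₁'(x₁) = v₂'(x₁). If x₁ is sufficiently close to 1, then v₁(1) ≠ v₂(1). -/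
/-!
Let `W = v₁ v₂' - v₁' v₂` be the Wronskian, say for `a < b`. It vanishes at `x₁` by the
matching Cauchy data and `W' = λ (a - b) v₁ v₂`. Since `v₁` and `v₂` agree at `x₁` and neither
vanishes on `[x₁, 1)`, `v₁ v₂ > 0` there, so `W < 0` on `(x₁, 1]`. In particular `v₁ 1 = v₂ 1`
forces `v₁ 1 ≠ 0`, and then `v₂ / v₁`, whose derivative is `W / v₁²`, is strictly decreasing
on `[x₁, 1]`, contradicting `v₂ / v₁ = 1` at both ends.
-/

open Set

def SolvesOscillatorOn (p : ℝ) (y y' : ℝ → ℝ) (S : Set ℝ) : Prop :=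
  ∀ x ∈ S, HasDerivAt y (y' x) x ∧ HasDerivAt y' (-(p * y x)) x

def wronskian (y y' z z' : ℝ → ℝ) (x : ℝ) : ℝ :=
  y x * z' x - y' x * z x

theorem IsPreconnected.mul_pos_of_ne_zero {X : Type*} [TopologicalSpace X] {s : Set X}
    {f : X → ℝ} (hs : IsPreconnected s) (hf : ContinuousOn f s) (hf0 : ∀ x ∈ s, f x ≠ 0)
    {x y : X} (hx : x ∈ s) (hy : y ∈ s) : 0 < f x * f y := by
  by_contra! h
  rcases mul_nonpos_iff.mp h with ⟨hx0, hy0⟩ | ⟨hx0, hy0⟩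
  · obtain ⟨z, hz, hfz⟩ := hs.intermediate_value hy hx hf ⟨hy0, hx0⟩
    exact hf0 z hz hfz
  · obtain ⟨z, hz, hfz⟩ := hs.intermediate_value hx hy hf ⟨hx0, hy0⟩
    exact hf0 z hz hfz

section Oscillator

variable {p q s t : ℝ} {y y' z z' : ℝ → ℝ}

theorem SolvesOscillatorOn.continuousOn {S : Set ℝ} (hy : SolvesOscillatorOn p y y' S) :
    ContinuousOn y S :=
  fun x hx ↦ (hy x hx).1.continuousAt.continuousWithinAt

theorem SolvesOscillatorOn.hasDerivAt_wronskian {S : Set ℝ} (hy : SolvesOscillatorOn p y y' S)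
    (hz : SolvesOscillatorOn q z z' S) {x : ℝ} (hx : x ∈ S) :
    HasDerivAt (wronskian y y' z z') ((p - q) * (y x * z x)) x :=
  (((hy x hx).1.mul (hz x hx).2).sub ((hy x hx).2.mul (hz x hx).1)).congr_deriv (by ring)

theorem mul_pos_of_eq_left_of_ne_zero (hy : ContinuousOn y (Icc s t))
    (hz : ContinuousOn z (Icc s t)) (hy0 : ∀ x ∈ Ico s t, y x ≠ 0)
    (hz0 : ∀ x ∈ Ico s t, z x ≠ 0) (hs : y s = z s) {x : ℝ} (hx : x ∈ Ico s t) :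
    0 < y x * z x := by
  have hsub : Icc s x ⊆ Ico s t := Icc_subset_Ico_right hx.2
  have hsub' : Icc s x ⊆ Icc s t := hsub.trans Ico_subset_Icc_self
  have hxs : x ∈ Icc s x := ⟨hx.1, le_rfl⟩
  have hss : s ∈ Icc s x := ⟨le_rfl, hx.1⟩
  have hy_sign := isPreconnected_Icc.mul_pos_of_ne_zero (hy.mono hsub')
    (fun w hw ↦ hy0 w (hsub hw)) hxs hss
  have hz_sign := isPreconnected_Icc.mul_pos_of_ne_zero (hz.mono hsub')
    (fun w hw ↦ hz0 w (hsub hw)) hxs hss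
  rw [hs] at hy_sign
  have := mul_pos hy_sign hz_sign
  nlinarith [sq_nonneg (z s)]

theorem wronskian_neg_of_mul_pos (hpq : p < q) (hy : SolvesOscillatorOn p y y' (Icc s t))
    (hz : SolvesOscillatorOn q z z' (Icc s t)) (hyz : ∀ x ∈ Ioo s t, 0 < y x * z x)
    (hW : wronskian y y' z z' s = 0) {x : ℝ} (hx : x ∈ Ioc s t) :
    wronskian y y' z z' x < 0 := by
  have hanti : StrictAntiOn (wronskian y y' z z') (Icc s t) := by
    refine strictAntiOn_of_deriv_neg (convex_Icc s t)
      (fun w hw ↦ (hy.hasDerivAt_wronskian hz hw).continuousAt.continuousWithinAt)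
      (fun w hw ↦ ?_)
    rw [interior_Icc] at hw
    rw [(hy.hasDerivAt_wronskian hz (Ioo_subset_Icc_self hw)).deriv]
    exact mul_neg_of_neg_of_pos (sub_neg.mpr hpq) (hyz w hw)
  simpa [hW] using hanti (left_mem_Icc.mpr (hx.1.le.trans hx.2)) (Ioc_subset_Icc_self hx) hx.1

theorem strictAntiOn_div_of_wronskian_neg (hy : ∀ x ∈ Icc s t, HasDerivAt y (y' x) x)
    (hz : ∀ x ∈ Icc s t, HasDerivAt z (z' x) x) (hy0 : ∀ x ∈ Icc s t, y x ≠ 0)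
    (hW : ∀ x ∈ Ioo s t, wronskian y y' z z' x < 0) :
    StrictAntiOn (fun x ↦ z x / y x) (Icc s t) := by
  have hderiv : ∀ x ∈ Icc s t,
      HasDerivAt (fun x ↦ z x / y x) ((z' x * y x - z x * y' x) / y x ^ 2) x :=
    fun x hx ↦ (hz x hx).div (hy x hx) (hy0 x hx)
  refine strictAntiOn_of_deriv_neg (convex_Icc s t)
    (fun x hx ↦ (hderiv x hx).continuousAt.continuousWithinAt) (fun x hx ↦ ?_)
  rw [interior_Icc] at hx
  rw [(hderiv x (Ioo_subset_Icc_self hx)).deriv]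
  have hWx := hW x hx
  have hyx := hy0 x (Ioo_subset_Icc_self hx)
  unfold wronskian at hWx
  exact div_neg_of_neg_of_pos (by linarith) (by positivity)

theorem SolvesOscillatorOn.ne_of_lt (hpq : p < q) (hst : s < t)
    (hy : SolvesOscillatorOn p y y' (Icc s t)) (hz : SolvesOscillatorOn q z z' (Icc s t))
    (hy0 : ∀ x ∈ Ico s t, y x ≠ 0) (hz0 : ∀ x ∈ Ico s t, z x ≠ 0)
    (hs : y s = z s) (hs' : y' s = z' s) : y t ≠ z t := by
  intro ht
  have hWs : wronskian y y' z z' s = 0 := by simp only [wronskian, hs, hs']; ring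
  have hyz : ∀ x ∈ Ioo s t, 0 < y x * z x := fun x hx ↦
    mul_pos_of_eq_left_of_ne_zero hy.continuousOn hz.continuousOn hy0 hz0 hs
      (Ioo_subset_Ico_self hx)
  have hW : ∀ x ∈ Ioc s t, wronskian y y' z z' x < 0 :=
    fun x ↦ wronskian_neg_of_mul_pos hpq hy hz hyz hWs
  have hyt : y t ≠ 0 := by
    intro hyt
    have hWt := hW t ⟨hst, le_rfl⟩
    simp [wronskian, hyt, ← ht] at hWt
  have hy0' : ∀ x ∈ Icc s t, y x ≠ 0 := fun x hx ↦
    hx.2.lt_or_eq.elim (fun hxt ↦ hy0 x ⟨hx.1, hxt⟩) (fun hxt ↦ hxt ▸ hyt)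
  have hanti := strictAntiOn_div_of_wronskian_neg (fun x hx ↦ (hy x hx).1)
    (fun x hx ↦ (hz x hx).1) hy0'
    (fun x hx ↦ hW x (Ioo_subset_Ioc_self hx)) (left_mem_Icc.mpr hst.le)
    (right_mem_Icc.mpr hst.le) hst
  dsimp only at hanti
  rw [← hs, ← ht, div_self (hy0 s (left_mem_Ico.mpr hst)), div_self hyt] at hanti
  exact lt_irrefl 1 hanti

end Oscillator

theorem stmt_10_general (a b lam : ℝ) (hab : a ≠ b)
    (hlam : 0 < lam) :
    ∃ δ > (0 : ℝ), ∀ x₁ ∈ Set.Ioo (1 - δ) (1 : ℝ), x₁ ∈ Set.Ioo (-1 : ℝ) 1 →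
      ∀ v₁ v₁' v₂ v₂' : ℝ → ℝ,
        (∀ x ∈ Set.Icc x₁ (1 : ℝ), HasDerivAt v₁ (v₁' x) x) →
        (∀ x ∈ Set.Icc x₁ (1 : ℝ), HasDerivAt v₁' (-(lam * a * v₁ x)) x) →
        (∀ x ∈ Set.Icc x₁ (1 : ℝ), HasDerivAt v₂ (v₂' x) x) →
        (∀ x ∈ Set.Icc x₁ (1 : ℝ), HasDerivAt v₂' (-(lam * b * v₂ x)) x) →
        (∀ x ∈ Set.Ico x₁ (1 : ℝ), v₁ x ≠ 0) →
        (∀ x ∈ Set.Ico x₁ (1 : ℝ), v₂ x ≠ 0) →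
        v₁ x₁ = v₂ x₁ → v₁' x₁ = v₂' x₁ →
        v₁ 1 ≠ v₂ 1 := by
  -- Any `δ` works: the nonvanishing hypotheses are all that "x₁ close to 1" is used for.
  refine ⟨1, one_pos, fun x₁ _ hx₁ v₁ v₁' v₂ v₂' hd₁ hd₁' hd₂ hd₂' h₁ h₂ hv hv' ↦ ?_⟩
  have hsol₁ : SolvesOscillatorOn (lam * a) v₁ v₁' (Icc x₁ 1) :=
    fun x hx ↦ ⟨hd₁ x hx, hd₁' x hx⟩
  have hsol₂ : SolvesOscillatorOn (lam * b) v₂ v₂' (Icc x₁ 1) :=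
    fun x hx ↦ ⟨hd₂ x hx, hd₂' x hx⟩
  rcases hab.lt_or_gt with hab | hab
  · exact hsol₁.ne_of_lt (mul_lt_mul_of_pos_left hab hlam) hx₁.2 hsol₂ h₁ h₂ hv hv'
  · exact (hsol₂.ne_of_lt (mul_lt_mul_of_pos_left hab hlam) hx₁.2 hsol₁ h₂ h₁ hv.symm
      hv'.symm).symm

/-- Lemma 6.4, strict Sturm comparison: two distinct linear
frequencies with identical Cauchy data at x₁ cannot give equal values at 1,
when x₁ is close enough to 1. -/
theorem stmt_10 (a b lam : ℝ) (ha : 0 < a) (hb : 0 < b) (hab : a ≠ b)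
    (hlam : 0 < lam) :
    ∃ δ > (0 : ℝ), ∀ x₁ ∈ Set.Ioo (1 - δ) (1 : ℝ), x₁ ∈ Set.Ioo (-1 : ℝ) 1 →
      ∀ v₁ v₁' v₂ v₂' : ℝ → ℝ,
        (∀ x ∈ Set.Icc x₁ (1 : ℝ), HasDerivAt v₁ (v₁' x) x) →
        (∀ x ∈ Set.Icc x₁ (1 : ℝ), HasDerivAt v₁' (-(lam * a * v₁ x)) x) →
        (∀ x ∈ Set.Icc x₁ (1 : ℝ), HasDerivAt v₂ (v₂' x) x) →
        (∀ x ∈ Set.Icc x₁ (1 : ℝ), HasDerivAt v₂' (-(lam * b * v₂ x)) x) →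
        (∀ x ∈ Set.Ico x₁ (1 : ℝ), v₁ x ≠ 0) →
        (∀ x ∈ Set.Ico x₁ (1 : ℝ), v₂ x ≠ 0) →
        v₁ x₁ = v₂ x₁ → v₁' x₁ = v₂' x₁ →
        v₁ 1 ≠ v₂ 1 :=
  stmt_10_general a b lam hab hlam
end

section
/- Let λ > 0, a, b > 0, and let u ∈ W^{2,1}(-1,1) have only simple zeros in [-1,1] (i.e., u(x) = 0 implies u'(x) ≠ 0). Then the map N : W^{2,1}(-1,1) → L¹(-1,1), N(v) = a v⁺ - b v⁻, is Fréchet differentiable at u with derivative DN(u)v = (a χ_{u⁺} + b χ_{u⁻}) v, where χ_{u⁺}, χ_{u⁻} are the characteristic functions of {x : u(x) > 0} and {x : u(x) < 0}. -/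
/-!
Simple zeros are isolated, so `u` has finitely many zeros on `[-1, 1]` and the measure of
`{|u| ≤ η}` tends to `0` with `η`. The map `φ(s) = a s⁺ - b s⁻` is linear on each side of `0`,
so its first-order remainder `φ(s + t) - φ(s) - φ'(s) t` vanishes when `|t| < |s|` and is
`O(|t|)` in general. By the embedding, `|v| ≤ |K| ‖v‖ < η` on `[-1, 1]` once `‖v‖` is small, so
the remainder is supported in `{|u| ≤ η}` and its integral is `O(‖v‖ · |{|u| ≤ η}|) = o(‖v‖)`.
-/

open MeasureTheory Set Filter Topology
open scoped ENNReal

def pwLinear (a b s : ℝ) : ℝ := a * max s 0 - b * max (-s) 0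

/-- The derivative of `pwLinear a b` away from `0`, extended by `0` at `0`. -/
noncomputable def pwLinearSlope (a b s : ℝ) : ℝ :=
  (if 0 < s then a else 0) + (if s < 0 then b else 0)

lemma abs_pwLinear_sub_le (a b s t : ℝ) :
    |pwLinear a b t - pwLinear a b s| ≤ (|a| + |b|) * |t - s| := by
  have hpos : |max t 0 - max s 0| ≤ |t - s| := abs_max_sub_max_le_abs t s 0
  have hneg : |max (-t) 0 - max (-s) 0| ≤ |t - s| := by
    simpa only [neg_sub_neg, abs_sub_comm] using abs_max_sub_max_le_abs (-t) (-s) 0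
  calc |pwLinear a b t - pwLinear a b s|
      = |a * (max t 0 - max s 0) - b * (max (-t) 0 - max (-s) 0)| := by
        unfold pwLinear; congr 1; ring
    _ ≤ |a| * |max t 0 - max s 0| + |b| * |max (-t) 0 - max (-s) 0| := by
        rw [← abs_mul, ← abs_mul]; exact abs_sub _ _
    _ ≤ (|a| + |b|) * |t - s| := by
        rw [add_mul]; gcongr

lemma abs_pwLinearSlope_le (a b s : ℝ) : |pwLinearSlope a b s| ≤ |a| + |b| := by
  unfold pwLinearSlope
  refine (abs_add_le _ _).trans (add_le_add ?_ ?_) <;> split_ifs <;> simp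

lemma abs_pwLinear_remainder_le (a b s t : ℝ) :
    |pwLinear a b (s + t) - pwLinear a b s - pwLinearSlope a b s * t| ≤ 2 * (|a| + |b|) * |t| :=
  calc |pwLinear a b (s + t) - pwLinear a b s - pwLinearSlope a b s * t|
      ≤ |pwLinear a b (s + t) - pwLinear a b s| + |pwLinearSlope a b s| * |t| := by
        rw [← abs_mul]; exact abs_sub _ _
    _ ≤ (|a| + |b|) * |t| + (|a| + |b|) * |t| := by
        gcongr
        · simpa using abs_pwLinear_sub_le a b s (s + t)
        · exact abs_pwLinearSlope_le a b s
    _ = 2 * (|a| + |b|) * |t| := by ring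

lemma pwLinear_remainder_eq_zero_of_abs_lt (a b : ℝ) {s t : ℝ} (h : |t| < |s|) :
    pwLinear a b (s + t) - pwLinear a b s - pwLinearSlope a b s * t = 0 := by
  have ht : -|t| ≤ t ∧ t ≤ |t| := abs_le.mp le_rfl
  unfold pwLinear pwLinearSlope
  rcases lt_trichotomy s 0 with hs | rfl | hs
  · rw [abs_of_neg hs] at h
    rw [max_eq_right (by linarith : s + t ≤ 0), max_eq_right hs.le,
      max_eq_left (by linarith : (0 : ℝ) ≤ -(s + t)), max_eq_left (by linarith : (0 : ℝ) ≤ -s),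
      if_neg (not_lt.mpr hs.le), if_pos hs]
    ring
  · simp only [abs_zero] at h
    linarith [abs_nonneg t]
  · rw [abs_of_pos hs] at h
    rw [max_eq_left (by linarith : 0 ≤ s + t), max_eq_left hs.le,
      max_eq_right (by linarith : -(s + t) ≤ 0), max_eq_right (by linarith : -s ≤ 0),
      if_pos hs, if_neg (not_lt.mpr hs.le)]
    ring

theorem IsCompact.finite_zeros_of_deriv_ne_zero {f : ℝ → ℝ} {s : Set ℝ} (hs : IsCompact s)
    (hf : Differentiable ℝ f) (hsimple : ∀ x ∈ s, f x = 0 → deriv f x ≠ 0) :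
    (s ∩ {x | f x = 0}).Finite := by
  refine (hs.inter_right (isClosed_singleton.preimage hf.continuous)).finite ?_
  rw [isDiscrete_iff_discreteTopology, discreteTopology_subtype_iff]
  rintro x ⟨hxs, hx0⟩
  rw [inf_principal_eq_bot]
  filter_upwards [(hf x).hasDerivAt.eventually_ne (c := 0) (hsimple x hxs hx0)] with y hy
  exact fun hy' => hy hy'.2

theorem exists_pos_measureReal_inter_abs_le_lt {α : Type*} [MeasurableSpace α] {μ : Measure α}
    {s : Set α} {f : α → ℝ} (hs : MeasurableSet s) (hf : Measurable f) (hμs : μ s ≠ ∞)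
    (hzero : μ (s ∩ {x | f x = 0}) = 0) {τ : ℝ} (hτ : 0 < τ) :
    ∃ η > 0, μ.real (s ∩ {x | |f x| ≤ η}) < τ := by
  set S : ℝ → Set α := fun η => s ∩ {x | |f x| ≤ η}
  have hSmeas : ∀ η, MeasurableSet (S η) := fun η =>
    hs.inter (measurableSet_le hf.abs measurable_const)
  have hSinter : ⋂ η > 0, S η = s ∩ {x | f x = 0} := by
    ext x
    simp only [S, mem_iInter, mem_inter_iff, mem_ofPred_eq]
    refine ⟨fun h => ⟨(h 1 one_pos).1, abs_nonpos_iff.mp ?_⟩,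
      fun ⟨hx, hx0⟩ η hη => ⟨hx, by rw [hx0, abs_zero]; exact hη.le⟩⟩
    exact le_of_forall_pos_le_add fun η hη => by simpa using (h η hη).2
  have hlim : Tendsto (μ ∘ S) (𝓝[>] 0) (𝓝 0) := by
    rw [← hzero, ← hSinter]
    exact tendsto_measure_biInter_gt (fun η _ => (hSmeas η).nullMeasurableSet)
      (fun _ _ _ hij => inter_subset_inter_right _ fun x hx => le_trans hx hij)
      ⟨1, one_pos, ne_top_of_le_ne_top hμs (measure_mono inter_subset_left)⟩
  obtain ⟨η, hημ, hη⟩ :=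
    ((hlim.eventually_lt_const (ENNReal.ofReal_pos.mpr hτ)).and self_mem_nhdsWithin).exists
  exact ⟨η, hη, ENNReal.toReal_lt_of_lt_ofReal hημ⟩

theorem setIntegral_abs_pwLinear_remainder_le {α : Type*} [MeasurableSpace α] {μ : Measure α}
    {s : Set α} (a b : ℝ) {f g : α → ℝ} {M η : ℝ} (hs : MeasurableSet s) (hμs : μ s < ∞)
    (hgM : ∀ x ∈ s, |g x| ≤ M) (hMη : M < η) :
    ∫ x in s, |pwLinear a b (f x + g x) - pwLinear a b (f x) - pwLinearSlope a b (f x) * g x| ∂μ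
      ≤ 2 * (|a| + |b|) * M * μ.real (s ∩ {x | |f x| ≤ η}) := by
  rw [setIntegral_eq_of_subset_of_forall_sdiff_eq_zero (s := s ∩ {x | |f x| ≤ η}) hs
    inter_subset_left]
  · refine (Real.le_norm_self _).trans (norm_setIntegral_le_of_norm_le_const
      ((measure_mono inter_subset_left).trans_lt hμs) fun x hx => ?_)
    rw [Real.norm_eq_abs, abs_abs]
    exact (abs_pwLinear_remainder_le a b _ _).trans (by gcongr; exact hgM x hx.1)
  · rintro x ⟨hx, hxη⟩
    have hfx : η < |f x| := lt_of_not_ge fun h => hxη ⟨hx, h⟩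
    rw [pwLinear_remainder_eq_zero_of_abs_lt a b (by linarith [hgM x hx]), abs_zero]

theorem stmt_17_general (a b : ℝ)
    (E : Type*) [NormedAddCommGroup E] [NormedSpace ℝ E]
    (ι : E → ℝ → ℝ) (hlin : IsLinearMap ℝ ι) (K : ℝ)
    (hdiff : ∀ v : E, Differentiable ℝ (ι v))
    (hemb : ∀ v : E, ∀ x ∈ Set.Icc (-1 : ℝ) 1,
      |ι v x| ≤ K * ‖v‖ ∧ |deriv (ι v) x| ≤ K * ‖v‖)
    (u : E)
    (hsimple : ∀ x ∈ Set.Icc (-1 : ℝ) 1, ι u x = 0 → deriv (ι u) x ≠ 0) :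
    ∀ ε > (0 : ℝ), ∃ δ > (0 : ℝ), ∀ v : E, ‖v‖ ≤ δ →
      (∫ x in Set.Icc (-1 : ℝ) 1,
        |(a * max (ι (u + v) x) 0 - b * max (-(ι (u + v) x)) 0)
          - (a * max (ι u x) 0 - b * max (-(ι u x)) 0)
          - ((Set.indicator {y : ℝ | 0 < ι u y} (fun _ => a) x
              + Set.indicator {y : ℝ | ι u y < 0} (fun _ => b) x) * ι v x)|)
      ≤ ε * ‖v‖ := by
  intro ε hε
  set L := 2 * (|a| + |b|)
  have hv_le : ∀ v : E, ∀ x ∈ Icc (-1 : ℝ) 1, |ι v x| ≤ |K| * ‖v‖ := fun v x hx =>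
    (hemb v x hx).1.trans (by gcongr; exact le_abs_self K)
  have hzero : volume (Icc (-1 : ℝ) 1 ∩ {x | ι u x = 0}) = 0 :=
    (isCompact_Icc.finite_zeros_of_deriv_ne_zero (hdiff u) hsimple).measure_zero _
  obtain ⟨η, hη, hvol⟩ := exists_pos_measureReal_inter_abs_le_lt measurableSet_Icc
    (hdiff u).continuous.measurable measure_Icc_lt_top.ne hzero
    (τ := ε / (L * |K| + 1)) (by positivity)
  refine ⟨η / (|K| + 1), by positivity, fun v hv => ?_⟩
  have hKv : |K| * ‖v‖ < η :=
    calc |K| * ‖v‖ ≤ |K| * (η / (|K| + 1)) := by gcongr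
      _ < η := by rw [mul_div_assoc', div_lt_iff₀ (by positivity)]; linarith
  calc _ = ∫ x in Icc (-1 : ℝ) 1, |pwLinear a b (ι u x + ι v x) - pwLinear a b (ι u x)
          - pwLinearSlope a b (ι u x) * ι v x| := by
        simp only [pwLinear, pwLinearSlope, hlin.map_add, Pi.add_apply, indicator_apply,
          mem_ofPred_eq]
    _ ≤ L * (|K| * ‖v‖) * volume.real (Icc (-1 : ℝ) 1 ∩ {x | |ι u x| ≤ η}) :=
        setIntegral_abs_pwLinear_remainder_le a b measurableSet_Icc measure_Icc_lt_top
          (hv_le v) hKv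
    _ ≤ L * (|K| * ‖v‖) * (ε / (L * |K| + 1)) := by gcongr
    _ ≤ ε * ‖v‖ := by
        rw [mul_div_assoc', div_le_iff₀ (by positivity)]
        nlinarith [mul_nonneg hε.le (norm_nonneg v)]

/-- Lemma 7.3: Fréchet differentiability of the Nemytskii map
N(v) = a v⁺ - b v⁻ from W^{2,1}(-1,1) to L¹(-1,1) at a function with only
simple zeros, with derivative DN(u)v = (a χ_{u⁺} + b χ_{u⁻}) v.
The Banach space `E` models W^{2,1}(-1,1), with `ι` the realization of its
elements as C¹ functions, continuously embedded in C¹ (constant `K`).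
The Fréchet derivative condition is stated by the L¹ estimate. -/
theorem stmt_17 (lam a b : ℝ) (hlam : 0 < lam) (ha : 0 < a) (hb : 0 < b)
    (E : Type*) [NormedAddCommGroup E] [NormedSpace ℝ E]
    (ι : E → ℝ → ℝ) (hlin : IsLinearMap ℝ ι) (K : ℝ)
    (hdiff : ∀ v : E, Differentiable ℝ (ι v))
    (hemb : ∀ v : E, ∀ x ∈ Set.Icc (-1 : ℝ) 1,
      |ι v x| ≤ K * ‖v‖ ∧ |deriv (ι v) x| ≤ K * ‖v‖)
    (u : E)
    (hsimple : ∀ x ∈ Set.Icc (-1 : ℝ) 1, ι u x = 0 → deriv (ι u) x ≠ 0) :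
    ∀ ε > (0 : ℝ), ∃ δ > (0 : ℝ), ∀ v : E, ‖v‖ ≤ δ →
      (∫ x in Set.Icc (-1 : ℝ) 1,
        |(a * max (ι (u + v) x) 0 - b * max (-(ι (u + v) x)) 0)
          - (a * max (ι u x) 0 - b * max (-(ι u x)) 0)
          - ((Set.indicator {y : ℝ | 0 < ι u y} (fun _ => a) x
              + Set.indicator {y : ℝ | ι u y < 0} (fun _ => b) x) * ι v x)|)
      ≤ ε * ‖v‖ :=
  stmt_17_general a b E ι hlin K hdiff hemb u hsimple
end
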